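/- Let H = (V_H, E_H) be a connected subgraph of G and let uv ∈ E_H. Suppose (i) the minimum of ⟨θ, y⟩ over all incidence vectors y of multicuts of H equals 0, and (ii) for every U ⊂ V_H with u ∈ U and v ∉ U it holds that Σ_{e ∈ δ(U, V_H \ U)} θ_e ≥ Σ_{e ∈ δ(V_H) ∩ E⁺} θ_e. Then there exists an optimal solution x* of the multicut problem min_{x ∈ MC(G)} ⟨θ, x⟩ with x*_{uv} = 0. -/

import Mathlib

/-!
Start from an optimal multicut, given by a labelling `f`; if `f u = f v` there is nothing to do.
Otherwise compare two moves, each giving a fresh label to a part of `V_H`. Relabelling all of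
`V_H` uncuts the cut edges inside `V_H` (weight `A`); relabelling only the `u`- and `v`-blocks
inside `V_H` uncuts the edges between these two blocks (weight `C`). Either move newly cuts only
edges of `δ(V_H)`, so it pays at most `P`, the positive part of `θ` on `δ(V_H)`. The second move
cannot improve on `f`, hence the first one does not lose as soon as `A + C ≥ 2P`.

That inequality is an averaging argument: sending every other label of `V_H` to the side of `u`
or of `v` by a fair coin yields a cut `δ(U, V_H \ U)` of expected weight `(A + C) / 2`, and each
such cut weighs at least `P` by the criterion. The expectation is unrolled one label at a time:
merging a label into `f u`, and separately into `f v`, gives two labellings whose values average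
to the current one.
-/

variable {V : Type} [Fintype V] [DecidableEq V]

/-- The set of edges of `G` with one endpoint in `U` and the other in `W` (δ(U, W)). -/
def btw (G : SimpleGraph V) [DecidableRel G.Adj] (U W : Finset V) : Finset (Sym2 V) :=
  G.edgeFinset.filter fun e => ∃ x ∈ U, ∃ y ∈ W, e = s(x, y)

/-- The cut δ(U) := δ(U, V \ U). -/
def cutδ (G : SimpleGraph V) [DecidableRel G.Adj] (U : Finset V) : Finset (Sym2 V) :=
  btw G U Uᶜ

/-- `M` is (the edge set of) a multicut of `G`. -/
def IsMulticut (G : SimpleGraph V) [DecidableRel G.Adj] (M : Finset (Sym2 V)) : Prop :=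
  M ⊆ G.edgeFinset ∧ ∃ f : V → V, ∀ x y, G.Adj x y → (s(x, y) ∈ M ↔ f x ≠ f y)

/-- `M` is (the edge set of) a multicut of the subgraph with edge set `EH`. -/
def IsMulticutOn (EH : Finset (Sym2 V)) (M : Finset (Sym2 V)) : Prop :=
  M ⊆ EH ∧ ∃ f : V → V, ∀ x y, s(x, y) ∈ EH → (s(x, y) ∈ M ↔ f x ≠ f y)

/-- The subgraph `(VH, EH)` is connected. -/
def ConnOn (VH : Finset V) (EH : Finset (Sym2 V)) : Prop :=
  VH.Nonempty ∧ ∀ a ∈ VH, ∀ b ∈ VH, Relation.ReflTransGen (fun x y => s(x, y) ∈ EH) a b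

open Finset

variable {L : Type*} [DecidableEq L]

lemma mem_btw (G : SimpleGraph V) [DecidableRel G.Adj] (U W : Finset V) (x y : V) :
    s(x, y) ∈ btw G U W ↔ G.Adj x y ∧ (x ∈ U ∧ y ∈ W ∨ y ∈ U ∧ x ∈ W) := by
  simp only [_root_.btw, mem_filter, SimpleGraph.mem_edgeFinset, SimpleGraph.mem_edgeSet,
    Sym2.eq_iff]
  constructor
  · rintro ⟨hxy, a, ha, b, hb, ⟨rfl, rfl⟩ | ⟨rfl, rfl⟩⟩ <;> tauto
  · rintro ⟨hxy, ⟨hx, hy⟩ | ⟨hy, hx⟩⟩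
    · exact ⟨hxy, x, hx, y, hy, Or.inl ⟨rfl, rfl⟩⟩
    · exact ⟨hxy, y, hy, x, hx, Or.inr ⟨rfl, rfl⟩⟩

lemma mem_cutδ (G : SimpleGraph V) [DecidableRel G.Adj] (U : Finset V) (x y : V) :
    s(x, y) ∈ cutδ G U ↔ G.Adj x y ∧ (x ∈ U ↔ y ∉ U) := by
  rw [cutδ, mem_btw]
  simp only [mem_compl]
  tauto

lemma btw_subset_edgeFinset (G : SimpleGraph V) [DecidableRel G.Adj] (U W : Finset V) :
    btw G U W ⊆ G.edgeFinset :=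
  filter_subset _ _

lemma cutδ_subset_edgeFinset (G : SimpleGraph V) [DecidableRel G.Adj] (U : Finset V) :
    cutδ G U ⊆ G.edgeFinset :=
  btw_subset_edgeFinset G U Uᶜ

def labelCut (G : SimpleGraph V) [DecidableRel G.Adj] (h : V → L) : Finset (Sym2 V) :=
  G.edgeFinset.filter fun e => ¬ (e.map h).IsDiag

omit [DecidableEq V] in
lemma labelCut_subset_edgeFinset (G : SimpleGraph V) [DecidableRel G.Adj] (h : V → L) :
    labelCut G h ⊆ G.edgeFinset :=
  filter_subset _ _

omit [DecidableEq V] in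
lemma mem_labelCut (G : SimpleGraph V) [DecidableRel G.Adj] (h : V → L) (x y : V) :
    s(x, y) ∈ labelCut G h ↔ G.Adj x y ∧ h x ≠ h y := by
  simp [labelCut]

lemma isMulticut_labelCut (G : SimpleGraph V) [DecidableRel G.Adj] (h : V → V) :
    IsMulticut G (labelCut G h) :=
  ⟨labelCut_subset_edgeFinset G h, h, fun x y hxy => by simp [mem_labelCut, hxy]⟩

lemma IsMulticut.exists_eq_labelCut {G : SimpleGraph V} [DecidableRel G.Adj]
    {M : Finset (Sym2 V)} (hM : IsMulticut G M) : ∃ h : V → V, M = labelCut G h := by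
  obtain ⟨hsub, f, hf⟩ := hM
  refine ⟨f, ?_⟩
  ext e
  induction e using Sym2.ind with
  | _ x y =>
    rw [mem_labelCut]
    by_cases hxy : G.Adj x y
    · simp [hf x y hxy, hxy]
    · simp only [hxy, false_and, iff_false]
      exact fun he => hxy (by simpa using hsub he)

lemma exists_forall_notMem_apply_ne (Q : Finset V) (hQ : Q.Nonempty) (f : V → V) :
    ∃ c, ∀ z ∉ Q, f z ≠ c := by
  obtain ⟨c, -, hc⟩ := exists_mem_notMem_of_card_lt_card
    (card_image_le.trans_lt ((card_compl_lt_iff_nonempty Q).mpr hQ) : #(Qᶜ.image f) < #univ)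
  exact ⟨c, fun z hz hzc => hc (mem_image.mpr ⟨z, mem_compl.mpr hz, hzc⟩)⟩

lemma sum_eq_sum_ite_of_subset {ι : Type*} [DecidableEq ι] (θ : ι → ℝ) {s t : Finset ι}
    (hst : s ⊆ t) : ∑ e ∈ s, θ e = ∑ e ∈ t, if e ∈ s then θ e else 0 := by
  rw [sum_ite_mem, inter_eq_right.mpr hst]

lemma sum_le_sum_filter_nonneg {ι : Type*} [DecidableEq ι] (θ : ι → ℝ) {s t : Finset ι}
    (hst : s ⊆ t) : ∑ e ∈ s, θ e ≤ ∑ e ∈ t.filter (fun e => 0 ≤ θ e), θ e := calc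
  ∑ e ∈ s, θ e = ∑ e ∈ t, if e ∈ s then θ e else 0 := sum_eq_sum_ite_of_subset θ hst
  _ ≤ ∑ e ∈ t, if 0 ≤ θ e then θ e else 0 := sum_le_sum fun e _ => by split_ifs <;> linarith
  _ = ∑ e ∈ t.filter (fun e => 0 ≤ θ e), θ e := (sum_filter _ _).symm

lemma sum_labelCut_relabel_add (G : SimpleGraph V) [DecidableRel G.Adj] (θ : Sym2 V → ℝ)
    (h : V → L) (Q : Finset V) (c : L) (hc : ∀ z ∉ Q, h z ≠ c) :
    ∑ e ∈ labelCut G (fun w => if w ∈ Q then c else h w), θ e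
        + ∑ e ∈ (labelCut G h).filter (· ∈ Q.sym2), θ e
      = ∑ e ∈ labelCut G h, θ e + ∑ e ∈ (cutδ G Q).filter (fun e => (e.map h).IsDiag), θ e := by
  have hcut := labelCut_subset_edgeFinset G h
  rw [sum_eq_sum_ite_of_subset θ (labelCut_subset_edgeFinset G _),
    sum_eq_sum_ite_of_subset θ ((filter_subset _ _).trans hcut), sum_eq_sum_ite_of_subset θ hcut,
    sum_eq_sum_ite_of_subset θ ((filter_subset _ _).trans (cutδ_subset_edgeFinset G Q)),
    ← sum_add_distrib, ← sum_add_distrib]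
  refine sum_congr rfl fun e he => ?_
  induction e using Sym2.ind with
  | _ x y =>
    have hxy : G.Adj x y := by simpa using he
    simp only [mem_filter, mem_labelCut, mem_cutδ, mk_mem_sym2_iff, Sym2.map_mk,
      Sym2.mk_isDiag_iff, hxy, true_and]
    split_ifs <;> grind

/-- Summed over the edges inside `V_H`, this is twice the expected weight of `δ(U, V_H \ U)` when
every label other than `α, β` is sent to `α` or to `β` by a fair coin and `U` is the `α` side. -/
def pairCutWeight (α β : L) (p : Sym2 L) : ℝ :=
  (if p.IsDiag then 0 else 1) + (if p = s(α, β) then 1 else 0)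

lemma pairCutWeight_map_update_add (α β a : L) (hαβ : α ≠ β) (haα : a ≠ α) (haβ : a ≠ β)
    (p : Sym2 L) :
    pairCutWeight α β (p.map (Function.update id a α))
      + pairCutWeight α β (p.map (Function.update id a β)) = 2 * pairCutWeight α β p := by
  induction p using Sym2.ind with
  | _ x y =>
    simp only [pairCutWeight, Sym2.map_mk, Sym2.mk_isDiag_iff, Sym2.eq_iff, Function.update_apply,
      id]
    split_ifs <;> grind

lemma sum_pairCutWeight_of_two_labels (G : SimpleGraph V) [DecidableRel G.Adj] (θ : Sym2 V → ℝ)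
    (VH : Finset V) (h : V → L) (α β : L) (hαβ : α ≠ β)
    (hlabel : ∀ w ∈ VH, h w = α ∨ h w = β) :
    ∑ e ∈ G.edgeFinset.filter (· ∈ VH.sym2), θ e * pairCutWeight α β (e.map h)
      = 2 * ∑ e ∈ btw G (VH.filter (h · = α)) (VH \ VH.filter (h · = α)), θ e := by
  rw [sum_eq_sum_ite_of_subset θ (btw_subset_edgeFinset G _ _), sum_filter, mul_sum]
  refine sum_congr rfl fun e he => ?_
  induction e using Sym2.ind with
  | _ x y =>
    have hxy : G.Adj x y := by simpa using he
    simp only [mk_mem_sym2_iff, mem_btw, mem_filter, mem_sdiff, pairCutWeight, Sym2.map_mk,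
      Sym2.mk_isDiag_iff, Sym2.eq_iff, hxy, true_and]
    split_ifs <;> grind

omit [Fintype V] [DecidableEq V] in
lemma card_image_update_comp_lt (s : Finset V) (h : V → L) {a γ : L} (ha : a ∈ s.image h)
    (hγ : γ ∈ s.image h) (hγa : γ ≠ a) :
    #(s.image (Function.update id a γ ∘ h)) < #(s.image h) := by
  refine lt_of_le_of_lt (card_le_card fun l hl => ?_) (card_erase_lt_of_mem ha)
  obtain ⟨x, hx, rfl⟩ := mem_image.mp hl
  by_cases hxa : h x = a
  · simp [hxa, hγa, hγ]
  · simpa [hxa] using ⟨x, hx, rfl⟩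

lemma two_mul_le_sum_pairCutWeight (G : SimpleGraph V) [DecidableRel G.Adj] (θ : Sym2 V → ℝ)
    (VH : Finset V) (u v : V) (hu : u ∈ VH) (hv : v ∈ VH) (P : ℝ)
    (hcrit : ∀ U : Finset V, U ⊂ VH → u ∈ U → v ∉ U → P ≤ ∑ e ∈ btw G U (VH \ U), θ e)
    (h : V → L) (huv : h u ≠ h v) :
    2 * P ≤ ∑ e ∈ G.edgeFinset.filter (· ∈ VH.sym2), θ e * pairCutWeight (h u) (h v) (e.map h) := by
  by_cases hextra : ∃ w ∈ VH, h w ≠ h u ∧ h w ≠ h v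
  · obtain ⟨w, hw, hwu, hwv⟩ := hextra
    have hmerge : ∀ x ∈ VH, h x ≠ h w → 2 * P ≤ ∑ e ∈ G.edgeFinset.filter (· ∈ VH.sym2),
        θ e * pairCutWeight (h u) (h v) (e.map (Function.update id (h w) (h x) ∘ h)) := by
      intro x hx hxw
      have hfix : ∀ y, h y ≠ h w → (Function.update id (h w) (h x) ∘ h) y = h y :=
        fun y hy => by simp [hy]
      have := two_mul_le_sum_pairCutWeight G θ VH u v hu hv P hcrit
        (Function.update id (h w) (h x) ∘ h) (by rwa [hfix u hwu.symm, hfix v hwv.symm])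
      rwa [hfix u hwu.symm, hfix v hwv.symm] at this
    have hsum : ∀ E : Finset (Sym2 V),
        ∑ e ∈ E, θ e * pairCutWeight (h u) (h v) (e.map (Function.update id (h w) (h u) ∘ h))
          + ∑ e ∈ E, θ e * pairCutWeight (h u) (h v) (e.map (Function.update id (h w) (h v) ∘ h))
          = 2 * ∑ e ∈ E, θ e * pairCutWeight (h u) (h v) (e.map h) := fun E => by
      rw [← sum_add_distrib, mul_sum]
      refine sum_congr rfl fun e _ => ?_
      rw [← Sym2.map_map, ← Sym2.map_map, ← mul_add,
        pairCutWeight_map_update_add _ _ _ huv hwu hwv, mul_left_comm]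
    linarith [hmerge u hu hwu.symm, hmerge v hv hwv.symm, hsum (G.edgeFinset.filter (· ∈ VH.sym2))]
  · push Not at hextra
    set U := VH.filter (h · = h u)
    have hU : U ⊂ VH := ⟨filter_subset _ _, fun hVU => huv (mem_filter.mp (hVU hv)).2.symm⟩
    rw [sum_pairCutWeight_of_two_labels G θ VH h _ _ huv fun w hw => ?_]
    · linarith [hcrit U hU (mem_filter.mpr ⟨hu, rfl⟩) fun hvU => huv (mem_filter.mp hvU).2.symm]
    · by_cases hwu : h w = h u
      exacts [Or.inl hwu, Or.inr (hextra w hw hwu)]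
termination_by #(VH.image h)
decreasing_by
  exact card_image_update_comp_lt VH h (mem_image_of_mem h hw) (mem_image_of_mem h hx) hxw

lemma filter_isDiag_cutδ_subset (G : SimpleGraph V) [DecidableRel G.Adj] (VH : Finset V)
    (f : V → L) (p : L → Prop) [DecidablePred p] :
    (cutδ G (VH.filter fun w => p (f w))).filter (fun e => (e.map f).IsDiag) ⊆ cutδ G VH := by
  intro e he
  induction e using Sym2.ind with
  | _ x y =>
    simp only [mem_filter, mem_cutδ, Sym2.map_mk, Sym2.mk_isDiag_iff] at he ⊢
    grind

lemma sum_pairCutWeight_eq_add (G : SimpleGraph V) [DecidableRel G.Adj] (θ : Sym2 V → ℝ)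
    (VH : Finset V) (f : V → L) (α β : L) (hαβ : α ≠ β) :
    ∑ e ∈ G.edgeFinset.filter (· ∈ VH.sym2), θ e * pairCutWeight α β (e.map f)
      = ∑ e ∈ (labelCut G f).filter (· ∈ VH.sym2), θ e
        + ∑ e ∈ (labelCut G f).filter (· ∈ (VH.filter (fun w => f w = α ∨ f w = β)).sym2), θ e := by
  have hcut := labelCut_subset_edgeFinset G f
  rw [sum_eq_sum_ite_of_subset θ ((filter_subset _ _).trans hcut),
    sum_eq_sum_ite_of_subset θ ((filter_subset _ _).trans hcut), sum_filter, ← sum_add_distrib]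
  refine sum_congr rfl fun e he => ?_
  induction e using Sym2.ind with
  | _ x y =>
    have hxy : G.Adj x y := by simpa using he
    simp only [mem_filter, mem_labelCut, mk_mem_sym2_iff, pairCutWeight, Sym2.map_mk,
      Sym2.mk_isDiag_iff, Sym2.eq_iff, hxy, true_and]
    split_ifs <;> grind

lemma sum_labelCut_relabel_le (G : SimpleGraph V) [DecidableRel G.Adj] (θ : Sym2 V → ℝ)
    (VH : Finset V) (u v : V) (hu : u ∈ VH) (hv : v ∈ VH)
    (hcrit : ∀ U : Finset V, U ⊂ VH → u ∈ U → v ∉ U →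
      ∑ e ∈ (cutδ G VH).filter (fun e => 0 ≤ θ e), θ e ≤ ∑ e ∈ btw G U (VH \ U), θ e)
    (f : V → V) (hopt : ∀ g : V → V, ∑ e ∈ labelCut G f, θ e ≤ ∑ e ∈ labelCut G g, θ e)
    (huv : f u ≠ f v) (c : V) (hc : ∀ z ∉ VH, f z ≠ c) :
    ∑ e ∈ labelCut G (fun w => if w ∈ VH then c else f w), θ e ≤ ∑ e ∈ labelCut G f, θ e := by
  obtain ⟨c', hc'⟩ := exists_forall_notMem_apply_ne (VH.filter fun w => f w = f u ∨ f w = f v)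
    ⟨u, by simp [hu]⟩ f
  have hmergeVH := sum_labelCut_relabel_add G θ f VH c hc
  have hmergeQ := sum_labelCut_relabel_add G θ f _ c' hc'
  have hbdVH := sum_le_sum_filter_nonneg θ (filter_subset (fun e => (e.map f).IsDiag) (cutδ G VH))
  have hbdQ := sum_le_sum_filter_nonneg θ
    (filter_isDiag_cutδ_subset G VH f fun l => l = f u ∨ l = f v)
  have hkey := two_mul_le_sum_pairCutWeight G θ VH u v hu hv _ hcrit f huv
  rw [sum_pairCutWeight_eq_add G θ VH f _ _ huv] at hkey
  linarith [hopt fun w => if w ∈ VH.filter (fun w => f w = f u ∨ f w = f v) then c' else f w]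

lemma exists_forall_sum_labelCut_le (G : SimpleGraph V) [DecidableRel G.Adj] (θ : Sym2 V → ℝ) :
    ∃ f : V → V, ∀ g : V → V, ∑ e ∈ labelCut G f, θ e ≤ ∑ e ∈ labelCut G g, θ e := by
  obtain ⟨f, -, hf⟩ := exists_min_image univ (fun g : V → V => ∑ e ∈ labelCut G g, θ e)
    ⟨id, mem_univ _⟩
  exact ⟨f, fun g => hf g (mem_univ g)⟩

theorem stmt_9_general (G : SimpleGraph V) [DecidableRel G.Adj] (θ : Sym2 V → ℝ)
    (VH : Finset V) (EH : Finset (Sym2 V))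
    (hEHverts : ∀ e ∈ EH, ∀ x ∈ e, x ∈ VH)
    (u v : V) (huv : s(u, v) ∈ EH)
    (hcrit : ∀ U : Finset V, U ⊂ VH → u ∈ U → v ∉ U →
      ∑ e ∈ (cutδ G VH).filter (fun e => 0 ≤ θ e), θ e ≤ ∑ e ∈ btw G U (VH \ U), θ e) :
    ∃ M, IsMulticut G M ∧
      (∀ N, IsMulticut G N → ∑ e ∈ M, θ e ≤ ∑ e ∈ N, θ e) ∧ s(u, v) ∉ M := by
  have hu : u ∈ VH := hEHverts _ huv u (Sym2.mem_mk_left u v)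
  have hv : v ∈ VH := hEHverts _ huv v (Sym2.mem_mk_right u v)
  obtain ⟨f, hf⟩ := exists_forall_sum_labelCut_le G θ
  have hopt : ∀ N, IsMulticut G N → ∑ e ∈ labelCut G f, θ e ≤ ∑ e ∈ N, θ e := fun N hN => by
    obtain ⟨g, rfl⟩ := hN.exists_eq_labelCut
    exact hf g
  by_cases hfuv : f u = f v
  · exact ⟨labelCut G f, isMulticut_labelCut G f, hopt, by simp [mem_labelCut, hfuv]⟩
  obtain ⟨c, hc⟩ := exists_forall_notMem_apply_ne VH ⟨u, hu⟩ f
  exact ⟨labelCut G (fun w => if w ∈ VH then c else f w), isMulticut_labelCut G _,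
    fun N hN => (sum_labelCut_relabel_le G θ VH u v hu hv hcrit f hf hfuv c hc).trans (hopt N hN),
    by simp [mem_labelCut, hu, hv]⟩

/-- multicut subgraph criterion (Theorem: Multicut Subgraph Criterion). -/
theorem stmt_9 (G : SimpleGraph V) [DecidableRel G.Adj] (θ : Sym2 V → ℝ)
    (VH : Finset V) (EH : Finset (Sym2 V))
    (hEHsub : EH ⊆ G.edgeFinset)
    (hEHverts : ∀ e ∈ EH, ∀ x ∈ e, x ∈ VH)
    (hconn : ConnOn VH EH)
    (u v : V) (huv : s(u, v) ∈ EH)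
    (htriv_lb : ∀ M, IsMulticutOn EH M → 0 ≤ ∑ e ∈ M, θ e)
    (htriv_eq : ∃ M, IsMulticutOn EH M ∧ ∑ e ∈ M, θ e = 0)
    (hcrit : ∀ U : Finset V, U ⊂ VH → u ∈ U → v ∉ U →
      ∑ e ∈ (cutδ G VH).filter (fun e => 0 ≤ θ e), θ e ≤ ∑ e ∈ btw G U (VH \ U), θ e) :
    ∃ M, IsMulticut G M ∧
      (∀ N, IsMulticut G N → ∑ e ∈ M, θ e ≤ ∑ e ∈ N, θ e) ∧ s(u, v) ∉ M :=
  stmt_9_general G θ VH EH hEHverts u v huv hcrit
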